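/- arXiv:2203.15539 — 2 statements merged into one kernel-verified Lean document; each statement's English description precedes it below -/
import Mathlib

section
/- Let n ≥ 1, let A be an invertible n×n real matrix, and let τ ∈ ℝ. Then ∫₀^τ (τ − s) · exp((τ − 2s)A) ds = (2A)⁻¹ · ( τ · exp(τA) − (2A)⁻¹ · ( exp(τA) − exp(−τA) ) ), where exp denotes the matrix exponential and the integral is the entrywise (Bochner) integral of the matrix-valued function s ↦ (τ−s)·exp((τ−2s)A). -/
open NormedSpace

/-!
With `B = (2A)⁻¹`, integrating by parts twice gives the integrand the explicit primitive
`G s = B² exp ((τ - 2s)A) - (τ - s) B exp ((τ - 2s)A)`: each differentiation of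
`exp ((τ - 2s)A)` produces a factor `-2A`, which `B` cancels. The identity is then the fundamental
theorem of calculus in any complete normed `ℝ`-algebra, and reading off a matrix entry commutes
with the integral because it is a continuous linear map.
-/

section NormedAlgebra

variable {𝔸 : Type*} [NormedRing 𝔸] [NormedAlgebra ℝ 𝔸] [CompleteSpace 𝔸]

theorem hasDerivAt_exp_sub_two_mul_smul (A : 𝔸) (τ s : ℝ) :
    HasDerivAt (fun u : ℝ => exp ((τ - 2 * u) • A))
      ((-2 : ℝ) • (A * exp ((τ - 2 * s) • A))) s := by
  have hlin : HasDerivAt (fun u : ℝ => τ - 2 * u) (-2) s := by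
    simpa using ((hasDerivAt_id s).const_mul (2 : ℝ)).const_sub τ
  exact (hasDerivAt_exp_smul_const' A (τ - 2 * s)).scomp s hlin

theorem continuous_sub_smul_exp_sub_two_mul_smul (A : 𝔸) (τ : ℝ) :
    Continuous fun s : ℝ => (τ - s) • exp ((τ - 2 * s) • A) :=
  (continuous_const.sub continuous_id).smul <| continuous_iff_continuousAt.2 fun s =>
    (hasDerivAt_exp_sub_two_mul_smul A τ s).continuousAt

theorem hasDerivAt_correction_primitive {A B : 𝔸} (hB : B * ((2 : ℝ) • A) = 1) (τ s : ℝ) :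
    HasDerivAt
      (fun u : ℝ => B * B * exp ((τ - 2 * u) • A) - (τ - u) • (B * exp ((τ - 2 * u) • A)))
      ((τ - s) • exp ((τ - 2 * s) • A)) s := by
  have hBA : B * A = (2⁻¹ : ℝ) • 1 := by
    rw [← inv_smul_smul₀ (two_ne_zero (α := ℝ)) (B * A), ← mul_smul_comm, hB]
  have hBAE : B * (A * exp ((τ - 2 * s) • A)) = (2⁻¹ : ℝ) • exp ((τ - 2 * s) • A) := by
    rw [← mul_assoc, hBA, smul_one_mul]
  have hE := hasDerivAt_exp_sub_two_mul_smul A τ s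
  have hτ : HasDerivAt (fun u : ℝ => τ - u) (-1) s := by
    simpa using (hasDerivAt_id s).const_sub τ
  refine ((hE.const_mul (B * B)).sub (hτ.smul (hE.const_mul B))).congr_deriv ?_
  simp only [mul_smul_comm, mul_assoc, hBAE]
  module

theorem integral_sub_smul_exp_sub_two_mul_smul {A B : 𝔸} (hB : B * ((2 : ℝ) • A) = 1)
    (τ : ℝ) :
    ∫ s in (0 : ℝ)..τ, (τ - s) • exp ((τ - 2 * s) • A)
      = B * (τ • exp (τ • A) - B * (exp (τ • A) - exp ((-τ) • A))) := by
  rw [intervalIntegral.integral_eq_sub_of_hasDerivAt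
    (fun s _ => hasDerivAt_correction_primitive hB τ s)
    ((continuous_sub_smul_exp_sub_two_mul_smul A τ).intervalIntegrable 0 τ)]
  have hτ : τ - 2 * τ = -τ := by ring
  simp only [hτ, sub_self, zero_smul, mul_zero, sub_zero, mul_sub, mul_smul_comm, mul_assoc]
  abel

end NormedAlgebra

theorem integral_exp_correction_general (n : ℕ)
    (A : Matrix (Fin n) (Fin n) ℝ) (hA : IsUnit A) (τ : ℝ) :
    ∀ i j : Fin n,
      (∫ s in (0 : ℝ)..τ, ((τ - s) • exp ((τ - 2 * s) • A)) i j)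
        = (((2 : ℝ) • A)⁻¹ *
            (τ • exp (τ • A)
              - ((2 : ℝ) • A)⁻¹ * (exp (τ • A) - exp ((-τ) • A)))) i j := by
  intro i j
  let : NormedRing (Matrix (Fin n) (Fin n) ℝ) := Matrix.linftyOpNormedRing
  let : NormedAlgebra ℝ (Matrix (Fin n) (Fin n) ℝ) := Matrix.linftyOpNormedAlgebra
  have h2A : IsUnit ((2 : ℝ) • A) := by
    rw [Algebra.smul_def]
    exact ((isUnit_iff_ne_zero.2 two_ne_zero).map _).mul hA
  have hB := Matrix.nonsing_inv_mul _ ((Matrix.isUnit_iff_isUnit_det _).1 h2A)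
  let entry := LinearMap.toContinuousLinearMap (Matrix.entryLinearMap ℝ ℝ i j)
  exact (entry.intervalIntegral_comp_comm
    ((continuous_sub_smul_exp_sub_two_mul_smul A τ).intervalIntegrable 0 τ)).trans
    (congrArg (fun M => M i j) (integral_sub_smul_exp_sub_two_mul_smul hB τ))

/-- **The correction-operator integral identity.** For an invertible `n×n` real matrix `A`
and `τ ∈ ℝ`,
`∫₀^τ (τ − s)·exp((τ − 2s)A) ds = (2A)⁻¹·(τ·exp(τA) − (2A)⁻¹·(exp(τA) − exp(−τA)))`,
where the integral is taken entrywise. -/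
theorem integral_exp_correction (n : ℕ) (hn : 1 ≤ n)
    (A : Matrix (Fin n) (Fin n) ℝ) (hA : IsUnit A) (τ : ℝ) :
    ∀ i j : Fin n,
      (∫ s in (0 : ℝ)..τ, ((τ - s) • exp ((τ - 2 * s) • A)) i j)
        = (((2 : ℝ) • A)⁻¹ *
            (τ • exp (τ • A)
              - ((2 : ℝ) • A)⁻¹ * (exp (τ • A) - exp ((-τ) • A)))) i j :=
  integral_exp_correction_general n A hA τ
end

section
/- Let n ≥ 1, let A be an invertible n×n real matrix, and let τ ∈ ℝ. Define φ₂(B) = ∑_{k=0}^∞ B^k / (k+2)! for a square matrix B. Then (2A)⁻¹ · ( τ · exp(τA) − (2A)⁻¹ · ( exp(τA) − exp(−τA) ) ) = τ² · exp(τA) · φ₂(−2τA). -/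
/-!
Put `C = 2A`, `E = exp(τA)` and `y = -2τA = -τC`. Splitting off the first two terms of the
exponential series gives `exp y = 1 + y + y² φ₂(y)`, and `E exp y = exp(-τA)` because all
matrices involved are functions of `A`. Hence `τ² C² E φ₂(y) = E y² φ₂(y) = τ C E - (E - exp(-τA))`,
and cancelling `C` twice gives the identity.
-/

open NormedSpace

/-- The entire φ-function `φ₂(B) = ∑_{k≥0} B^k / (k+2)!` of a square real matrix. -/
noncomputable def phi2 {n : ℕ} (B : Matrix (Fin n) (Fin n) ℝ) : Matrix (Fin n) (Fin n) ℝ :=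
  ∑' k : ℕ, (((k + 2).factorial : ℝ))⁻¹ • B ^ k

open Nat

section BanachAlgebra

variable {𝔸 : Type*} [NormedRing 𝔸] [NormedAlgebra ℝ 𝔸] [CompleteSpace 𝔸]

theorem summable_inv_factorial_add_two_smul_pow (x : 𝔸) :
    Summable fun k : ℕ => ((k + 2)! : ℝ)⁻¹ • x ^ k := by
  refine .of_norm_bounded (norm_expSeries_summable' (𝕂 := ℝ) x) fun k => ?_
  rw [norm_smul, norm_smul]
  gcongr
  simp only [norm_inv, Real.norm_natCast]
  gcongr
  omega

theorem exp_eq_one_add_add_sq_mul_tsum (x : 𝔸) :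
    exp x = 1 + x + x ^ 2 * ∑' k : ℕ, ((k + 2)! : ℝ)⁻¹ • x ^ k := by
  have hexp := expSeries_summable' (𝕂 := ℝ) x
  rw [congrFun (exp_eq_tsum ℝ) x, hexp.tsum_eq_zero_add,
    ((summable_nat_add_iff 1).2 hexp).tsum_eq_zero_add,
    ← (summable_inv_factorial_add_two_smul_pow x).tsum_mul_left]
  simp only [mul_smul_comm, ← pow_add, add_comm 2, add_assoc, one_add_one_eq_two]
  norm_num

end BanachAlgebra

namespace Matrix

variable {n : ℕ}

theorem exp_eq_one_add_add_sq_mul_phi2 (B : Matrix (Fin n) (Fin n) ℝ) :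
    exp B = 1 + B + B ^ 2 * phi2 B := by
  let : NormedRing (Matrix (Fin n) (Fin n) ℝ) := Matrix.linftyOpNormedRing
  let : NormedAlgebra ℝ (Matrix (Fin n) (Fin n) ℝ) := Matrix.linftyOpNormedAlgebra
  exact exp_eq_one_add_add_sq_mul_tsum B

theorem two_smul_mul_two_smul_mul_exp_mul_phi2 (A : Matrix (Fin n) (Fin n) ℝ) (τ : ℝ) :
    (2 : ℝ) • A * ((2 : ℝ) • A * (τ ^ 2 • (exp (τ • A) * phi2 ((-(2 * τ)) • A)))) =
      (2 : ℝ) • A * (τ • exp (τ • A)) - (exp (τ • A) - exp ((-τ) • A)) := by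
  set y := (-(2 * τ)) • A
  have hprod : exp (τ • A) * exp y = exp ((-τ) • A) := by
    rw [← exp_add_of_commute _ _ (((Commute.refl A).smul_left _).smul_right _), ← add_smul]
    ring_nf
  have hcomm : Commute A (exp (τ • A)) := ((Commute.refl A).smul_right τ).exp_right
  calc (2 : ℝ) • A * ((2 : ℝ) • A * (τ ^ 2 • (exp (τ • A) * phi2 y)))
      = exp (τ • A) * (y ^ 2 * phi2 y) := by
        simp only [y, sq, smul_mul_assoc, mul_smul_comm, smul_smul, ← mul_assoc, hcomm.eq]
        module
    _ = exp (τ • A) * (exp y - 1 - y) := by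
        rw [exp_eq_one_add_add_sq_mul_phi2 y]
        abel_nf
    _ = (2 : ℝ) • A * (τ • exp (τ • A)) - (exp (τ • A) - exp ((-τ) • A)) := by
        rw [mul_sub, mul_sub, hprod, mul_one]
        simp only [y, mul_smul_comm, smul_mul_assoc, hcomm.eq]
        module

end Matrix

theorem correction_eq_phi2_general (n : ℕ)
    (A : Matrix (Fin n) (Fin n) ℝ) (hA : IsUnit A) (τ : ℝ) :
    ((2 : ℝ) • A)⁻¹ *
        (τ • exp (τ • A) - ((2 : ℝ) • A)⁻¹ * (exp (τ • A) - exp ((-τ) • A)))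
      = τ ^ 2 • (exp (τ • A) * phi2 ((-(2 * τ)) • A)) := by
  have hdet : IsUnit ((2 : ℝ) • A).det := by
    rw [Matrix.det_smul]
    exact (isUnit_iff_ne_zero.2 (by positivity)).mul ((Matrix.isUnit_iff_isUnit_det A).1 hA)
  rw [← Matrix.nonsing_inv_mul_cancel_left _ (τ • exp (τ • A)) hdet, ← mul_sub,
    ← Matrix.two_smul_mul_two_smul_mul_exp_mul_phi2, Matrix.nonsing_inv_mul_cancel_left _ _ hdet,
    Matrix.nonsing_inv_mul_cancel_left _ _ hdet]

/-- **Equivalence of the two formulations of the correction operator.** For an invertible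
`n×n` real matrix `A` and `τ ∈ ℝ`,
`(2A)⁻¹·(τ·exp(τA) − (2A)⁻¹·(exp(τA) − exp(−τA))) = τ²·exp(τA)·φ₂(−2τA)`. -/
theorem correction_eq_phi2 (n : ℕ) (hn : 1 ≤ n)
    (A : Matrix (Fin n) (Fin n) ℝ) (hA : IsUnit A) (τ : ℝ) :
    ((2 : ℝ) • A)⁻¹ *
        (τ • exp (τ • A) - ((2 : ℝ) • A)⁻¹ * (exp (τ • A) - exp ((-τ) • A)))
      = τ ^ 2 • (exp (τ • A) * phi2 ((-(2 * τ)) • A)) :=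
  correction_eq_phi2_general n A hA τ
end
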